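/- arXiv:2009.09311 — 5 statements merged into one kernel-verified Lean document; each statement's English description precedes it below -/
import Mathlib

section
/- Let k be a finite field with q elements, m < q, and let RS_q(m) denote the Reed–Solomon code of dimension m, i.e. the image in k^q of the space of polynomials over k of degree at most m-1 under evaluation at all q elements of k (in a fixed order). Then the dual code of RS_q(m) with respect to the standard bilinear form on k^q equals RS_q(q-m). -/
open Polynomial

/-- Evaluation of a polynomial at every element of `k`, as a linear map. -/
noncomputable def evalAll (k : Type*) [CommRing k] : k[X] →ₗ[k] (k → k) where
  toFun p := fun x => p.eval x
  map_add' p q := by funext x; simp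
  map_smul' c p := by funext x; simp

/-- The Reed–Solomon code `RS_q(m)` of dimension `m`: the image in `k^q` of the space of
polynomials of degree at most `m - 1` (i.e. degree `< m`) under evaluation at all
elements of `k`. -/
noncomputable def RS (k : Type*) [Field k] [Fintype k] (m : ℕ) : Submodule k (k → k) :=
  (Polynomial.degreeLT k m).map (evalAll k)

/-- The dual code with respect to the standard dot product. -/
def dualCode {k : Type*} [Field k] {ι : Type*} [Fintype ι] (C : Submodule k (ι → k)) :
    Submodule k (ι → k) where
  carrier := {v | ∀ c ∈ C, ∑ i, v i * c i = 0}
  zero_mem' := by simp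
  add_mem' := by
    intro u v hu hv c hc
    simp only [Set.mem_setOf_eq] at hu hv
    simp only [Set.mem_setOf_eq, Pi.add_apply, add_mul, Finset.sum_add_distrib,
      hu c hc, hv c hc, add_zero]
  smul_mem' := by
    intro a u hu c hc
    simp only [Set.mem_setOf_eq] at hu
    simp only [Set.mem_setOf_eq, Pi.smul_apply, smul_eq_mul, mul_assoc,
      ← Finset.mul_sum, hu c hc, mul_zero]

open Module Submodule

section Aux

/-- The dot-product pairing as a linear map into the dual. -/
noncomputable def dotL (k : Type*) (ι : Type*) [Field k] [Fintype ι] :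
    (ι → k) →ₗ[k] Module.Dual k (ι → k) where
  toFun v :=
    { toFun := fun c => ∑ i, v i * c i
      map_add' := by intro a b; simp [mul_add, Finset.sum_add_distrib]
      map_smul' := by intro a b; simp [Finset.mul_sum, mul_left_comm] }
  map_add' u v := by ext c; simp [add_mul, Finset.sum_add_distrib]
  map_smul' a v := by ext c; simp [Finset.mul_sum, mul_assoc]

variable {k : Type*} [Field k]

lemma dotL_injective (ι : Type*) [Fintype ι] :
    Function.Injective (dotL k ι) := by
  classical
  rw [injective_iff_map_eq_zero]
  intro v hv
  funext i
  have := congrFun (congrArg DFunLike.coe hv) (Pi.single i 1)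
  simpa [dotL, Pi.single_apply, mul_ite] using this

omit [Field k] in
lemma dualCode_eq_comap [Field k] {ι : Type*} [Fintype ι] (C : Submodule k (ι → k)) :
    dualCode C = C.dualAnnihilator.comap (dotL k ι) := by
  ext v
  simp only [Submodule.mem_comap, Submodule.mem_dualAnnihilator]
  rfl

/-- The dot-product pairing as an equivalence. -/
noncomputable def dotEquiv (k ι : Type*) [Field k] [Fintype ι] :
    (ι → k) ≃ₗ[k] Module.Dual k (ι → k) :=
  (dotL k ι).linearEquivOfInjective (dotL_injective ι) Subspace.dual_finrank_eq.symm

lemma finrank_dualCode {ι : Type*} [Fintype ι] (C : Submodule k (ι → k)) :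
    finrank k (dualCode C) = Fintype.card ι - finrank k C := by
  have h0 : C.dualAnnihilator.comap (dotL k ι)
      = C.dualAnnihilator.comap (dotEquiv k ι : (ι → k) →ₗ[k] Module.Dual k (ι → k)) := rfl
  have h1 : finrank k (dualCode C) = finrank k C.dualAnnihilator := by
    rw [dualCode_eq_comap, h0]
    exact LinearEquiv.finrank_eq ((dotEquiv k ι).ofSubmodule' _)
  have h2 : finrank k C.dualAnnihilator = finrank k ((ι → k) ⧸ C) :=
    (Subspace.quotEquivAnnihilator C).finrank_eq.symm
  have h3 : finrank k ((ι → k) ⧸ C) + finrank k C = finrank k (ι → k) :=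
    Submodule.finrank_quotient_add_finrank C
  have h4 : finrank k (ι → k) = Fintype.card ι := Module.finrank_pi k
  have h5 : finrank k C ≤ finrank k (ι → k) := Submodule.finrank_le C
  omega

variable [Fintype k]

lemma evalAll_injOn {n : ℕ} (hn : n ≤ Fintype.card k) {p : k[X]}
    (hp : p ∈ degreeLT k n) (h : evalAll k p = 0) : p = 0 := by
  refine Polynomial.eq_zero_of_natDegree_lt_card_of_eval_eq_zero p Function.injective_id
    (fun x => congrFun h x) ?_
  rcases eq_or_ne p 0 with rfl | hp0
  · simpa using Fintype.card_pos
  · have := Polynomial.mem_degreeLT.mp hp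
    rw [Polynomial.degree_eq_natDegree hp0] at this
    exact_mod_cast lt_of_lt_of_le (by exact_mod_cast this) (by exact_mod_cast hn)

lemma finrank_RS {n : ℕ} (hn : n ≤ Fintype.card k) : finrank k (RS k n) = n := by
  have hr : RS k n = LinearMap.range ((evalAll k).comp (degreeLT k n).subtype) := by
    rw [LinearMap.range_comp, Submodule.range_subtype]; rfl
  have hinj : Function.Injective ((evalAll k).comp (degreeLT k n).subtype) := by
    rw [injective_iff_map_eq_zero]
    intro p hp
    exact Subtype.ext (evalAll_injOn hn p.2 hp)
  rw [hr, LinearMap.finrank_range_of_inj hinj]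
  rw [(Polynomial.degreeLTEquiv k n).finrank_eq, Module.finrank_fin_fun]

lemma sum_eval_eq_zero {p : k[X]} (hp : p ∈ degreeLT k (Fintype.card k - 1)) :
    ∑ x : k, p.eval x = 0 := by
  have := Polynomial.eval_eq_sum_degreeLTEquiv hp
  calc ∑ x : k, p.eval x
      = ∑ x : k, ∑ i : Fin (Fintype.card k - 1),
        Polynomial.degreeLTEquiv k _ ⟨p, hp⟩ i * x ^ (i : ℕ) := by
        exact Finset.sum_congr rfl fun x _ => Polynomial.eval_eq_sum_degreeLTEquiv hp x
    _ = ∑ i : Fin (Fintype.card k - 1),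
        Polynomial.degreeLTEquiv k _ ⟨p, hp⟩ i * ∑ x : k, x ^ (i : ℕ) := by
        rw [Finset.sum_comm]
        exact Finset.sum_congr rfl fun i _ => by rw [Finset.mul_sum]
    _ = 0 := by
        refine Finset.sum_eq_zero fun i _ => ?_
        rw [FiniteField.sum_pow_lt_card_sub_one k (i : ℕ) i.isLt, mul_zero]

end Aux

/-- The dual of the Reed–Solomon code `RS_q(m)` (for `m < q`) is `RS_q(q - m)`. -/
theorem dual_RS (k : Type*) [Field k] [Fintype k] (q m : ℕ)
    (hq : Fintype.card k = q) (hm : m < q) :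
    dualCode (RS k m) = RS k (q - m) := by
  subst hq
  set q := Fintype.card k
  have hle : RS k (q - m) ≤ dualCode (RS k m) := by
    rintro v ⟨g, hg, rfl⟩ c ⟨f, hf, rfl⟩
    have hmem : g * f ∈ degreeLT k (q - 1) := by
      rcases eq_or_ne g 0 with rfl | hg0
      · simp
      rcases eq_or_ne f 0 with rfl | hf0
      · simp
      have h1 := Polynomial.mem_degreeLT.mp hg
      have h2 := Polynomial.mem_degreeLT.mp hf
      rw [Polynomial.degree_eq_natDegree hg0] at h1
      rw [Polynomial.degree_eq_natDegree hf0] at h2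
      have h1' : g.natDegree < q - m := by exact_mod_cast h1
      have h2' : f.natDegree < m := by exact_mod_cast h2
      rw [Polynomial.mem_degreeLT]
      calc (g * f).degree ≤ g.degree + f.degree := Polynomial.degree_mul_le g f
        _ < (q - 1 : ℕ) := by
            rw [Polynomial.degree_eq_natDegree hg0, Polynomial.degree_eq_natDegree hf0]
            exact_mod_cast (by omega : g.natDegree + f.natDegree < q - 1)
    have := sum_eval_eq_zero hmem
    simpa [evalAll, Polynomial.eval_mul] using this
  have hfd : finrank k (dualCode (RS k m)) = q - m := by
    rw [finrank_dualCode, finrank_RS (le_of_lt hm)]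
  have hfr : finrank k (RS k (q - m)) = q - m := finrank_RS (Nat.sub_le q m)
  exact (Submodule.eq_of_le_of_finrank_eq hle (by rw [hfr, hfd])).symm
end

section
/- Let F be a field, let V_1, ..., V_r (r > 1) be finite-dimensional F-vector spaces each with a fixed basis and dim V_i ≥ 2, and let 0 ≠ U_i ⊊ V_i be nonzero proper subspaces. Then the subspace S = Σ_{i=1}^r V_1 ⊗ ... ⊗ U_i ⊗ ... ⊗ V_r of V_1 ⊗ ... ⊗ V_r cannot be obtained by applying an invertible diagonal linear map (with respect to the induced basis of pure tensors of basis vectors) to any subspace of the form W_1 ⊗ W_2 ⊗ ... ⊗ W_r with W_i ⊆ V_i. -/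
/-- The `r`-fold tensor product `W 1 ⊗ ... ⊗ W r` of subspaces `W i ⊆ F^{n i}`, realized
inside `F^{n 1 ⋯ n r} ≅ F^{n 1} ⊗ ... ⊗ F^{n r}` (functions on `Π i, Fin (n i)`): the
span of the pure tensors `w 1 ⊗ ... ⊗ w r` with `w i ∈ W i`. -/
def mtensor {F : Type*} [Field F] {r : ℕ} {n : Fin r → ℕ}
    (W : ∀ i, Submodule F (Fin (n i) → F)) : Submodule F ((∀ i, Fin (n i)) → F) :=
  Submodule.span F
    {x | ∃ w : ∀ i, Fin (n i) → F, (∀ i, w i ∈ W i) ∧ x = fun j => ∏ i, w i (j i)}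

/-- The invertible diagonal linear map scaling the coordinate at `j` by `d j`. -/
def scalingMap {F : Type*} [Field F] {ι : Type*} (d : ι → F) : (ι → F) →ₗ[F] (ι → F) where
  toFun x := fun j => d j * x j
  map_add' x y := by funext j; simp [mul_add]
  map_smul' c x := by funext j; simp only [Pi.smul_apply, smul_eq_mul, RingHom.id_apply]; ring

section Aux
variable {F : Type*} [Field F]

/-- The linear functional `x ↦ ∑ t, c t * x (p t)`. -/
def ctr {ι κ : Type*} [Fintype ι] (c : ι → F) (p : ι → κ) : (κ → F) →ₗ[F] F where
  toFun x := ∑ t, c t * x (p t)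
  map_add' x y := by simp [mul_add, Finset.sum_add_distrib]
  map_smul' m x := by
    simp only [Pi.smul_apply, smul_eq_mul, RingHom.id_apply, Finset.mul_sum]
    exact Finset.sum_congr rfl fun t _ => by ring

@[simp] lemma ctr_apply {ι κ : Type*} [Fintype ι] (c : ι → F) (p : ι → κ) (x : κ → F) :
    ctr c p x = ∑ t, c t * x (p t) := rfl

lemma eval_eq_sum_coords {m : ℕ} (φ : (Fin m → F) →ₗ[F] F) (v : Fin m → F) :
    φ v = ∑ a, v a * φ (fun b => if a = b then 1 else 0) := by
  conv_lhs => rw [pi_eq_sum_univ v]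
  rw [map_sum]
  exact Finset.sum_congr rfl fun a _ => by rw [map_smul, smul_eq_mul]

lemma exists_perp_coeffs {m : ℕ} (W : Submodule F (Fin m → F)) (hW : W ≠ ⊤) :
    ∃ f : Fin m → F, f ≠ 0 ∧ ∀ w ∈ W, ∑ a, f a * w a = 0 := by
  obtain ⟨φ, hφ0, hφ⟩ :=
    W.exists_dual_map_eq_bot_of_lt_top (lt_top_iff_ne_top.mpr hW) inferInstance
  refine ⟨fun a => φ (fun b => if a = b then 1 else 0), ?_, ?_⟩
  · intro hf
    apply hφ0
    apply LinearMap.ext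
    intro v
    rw [eval_eq_sum_coords]
    simp only [LinearMap.zero_apply]
    refine Finset.sum_eq_zero fun a _ => ?_
    have : φ (fun b => if a = b then (1:F) else 0) = 0 := congrFun hf a
    rw [this, mul_zero]
  · intro w hw
    have hmem : φ w ∈ Submodule.map φ W := ⟨w, hw, rfl⟩
    rw [hφ, Submodule.mem_bot] at hmem
    calc ∑ a, (fun a => φ fun b => if a = b then (1:F) else 0) a * w a
        = ∑ a, w a * φ (fun b => if a = b then (1:F) else 0) :=
          Finset.sum_congr rfl fun a _ => mul_comm _ _
      _ = φ w := (eval_eq_sum_coords φ w).symm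
      _ = 0 := hmem

end Aux


section Aux2
variable {F : Type*} [Field F] {r : ℕ} {n : Fin r → ℕ}

/-- Contracting a pure tensor along slot `k`. -/
lemma pure_contract (w : ∀ i, Fin (n i) → F) (k : Fin r) (f : Fin (n k) → F)
    (j : ∀ i, Fin (n i)) :
    ∑ a, f a * ∏ i, w i (Function.update j k a i) =
      (∑ a, f a * w k a) * ∏ i ∈ Finset.univ.erase k, w i (j i) := by
  have hprod : ∀ a : Fin (n k), ∏ i, w i (Function.update j k a i) =
      w k a * ∏ i ∈ Finset.univ.erase k, w i (j i) := by
    intro a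
    rw [← Finset.mul_prod_erase Finset.univ _ (Finset.mem_univ k)]
    congr 1
    · rw [Function.update_self]
    · exact Finset.prod_congr rfl fun i hi => by
        rw [Function.update_of_ne (Finset.ne_of_mem_erase hi)]
  simp_rw [hprod]
  rw [Finset.sum_mul]
  exact Finset.sum_congr rfl fun a _ => by ring

/-- Elements of `mtensor W` are annihilated by contraction along slot `k` with a
functional vanishing on `W k`. -/
lemma mtensor_contract (W : ∀ i, Submodule F (Fin (n i) → F)) (k : Fin r)
    (f : Fin (n k) → F) (hf : ∀ w ∈ W k, ∑ a, f a * w a = 0)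
    {y : (∀ i, Fin (n i)) → F} (hy : y ∈ mtensor W) (j : ∀ i, Fin (n i)) :
    ∑ a, f a * y (Function.update j k a) = 0 := by
  have hle : mtensor W ≤ LinearMap.ker (ctr f (fun a => Function.update j k a)) := by
    refine Submodule.span_le.mpr ?_
    rintro x ⟨w, hw, rfl⟩
    simp only [SetLike.mem_coe, LinearMap.mem_ker, ctr_apply]
    rw [pure_contract, hf _ (hw k), zero_mul]
  have := hle hy
  rw [LinearMap.mem_ker, ctr_apply] at this
  exact this

/-- Total contraction of a pure tensor. -/
lemma pure_total_contract (g w : ∀ i, Fin (n i) → F) :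
    ∑ j : ∀ i, Fin (n i), (∏ i, g i (j i)) * ∏ i, w i (j i) =
      ∏ i, ∑ a, g i a * w i a := by
  rw [Finset.prod_univ_sum]
  rw [Fintype.piFinset_univ]
  exact Finset.sum_congr rfl fun j _ => Finset.prod_mul_distrib.symm

/-- If every `W i` is the full space, `mtensor W` is everything. -/
lemma mtensor_top (W : ∀ i, Submodule F (Fin (n i) → F)) (hW : ∀ i, W i = ⊤) :
    mtensor W = ⊤ := by
  rw [eq_top_iff]
  intro x _
  rw [pi_eq_sum_univ x]
  refine Submodule.sum_mem _ fun j _ => Submodule.smul_mem _ _ ?_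
  refine Submodule.subset_span ⟨fun i a => if j i = a then 1 else 0, fun i => by simp [hW i], ?_⟩
  funext j'
  by_cases hjj : j = j'
  · subst hjj; simp
  · obtain ⟨i, hi⟩ := Function.ne_iff.mp hjj
    rw [if_neg hjj]
    refine (Finset.prod_eq_zero (Finset.mem_univ i) ?_).symm
    exact if_neg hi

end Aux2

/-- Let `V i = F^{n i}` (with `r > 1`, `n i ≥ 2`) and `0 ≠ U i ⊊ V i` proper nonzero
subspaces. Then `Σᵢ V 1 ⊗ ⋯ ⊗ U i ⊗ ⋯ ⊗ V r` is not the image of any subspace of the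
form `W 1 ⊗ ⋯ ⊗ W r` under an invertible diagonal map (w.r.t. the standard basis of
pure tensors of basis vectors). -/
theorem sum_tensor_ne_scaled_tensor (F : Type*) [Field F] (r : ℕ) (hr : 1 < r)
    (n : Fin r → ℕ) (hn : ∀ i, 2 ≤ n i)
    (U : ∀ i, Submodule F (Fin (n i) → F)) (hU0 : ∀ i, U i ≠ ⊥) (hU1 : ∀ i, U i ≠ ⊤)
    (d : (∀ i, Fin (n i)) → F) (hd : ∀ j, d j ≠ 0)
    (W : ∀ i, Submodule F (Fin (n i) → F)) :
    (⨆ i : Fin r, mtensor fun l => if l = i then U l else ⊤) ≠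
      Submodule.map (scalingMap d) (mtensor W) := by
  intro h
  classical
  -- Step A: some `W k` is a proper subspace.
  have hWprop : ∃ k, W k ≠ ⊤ := by
    by_contra hall
    push_neg at hall
    have hsurj : Function.Surjective (scalingMap d) := by
      intro y
      refine ⟨fun j => (d j)⁻¹ * y j, funext fun j => ?_⟩
      show d j * ((d j)⁻¹ * y j) = y j
      rw [mul_inv_cancel_left₀ (hd j)]
    have hStop : (⨆ i : Fin r, mtensor fun l => if l = i then U l else ⊤) = ⊤ := by
      rw [h, mtensor_top W hall, Submodule.map_top, LinearMap.range_eq_top.mpr hsurj]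
    choose g hg0 hgperp using fun i => exists_perp_coeffs (U i) (hU1 i)
    choose c hc using fun i => Function.ne_iff.mp (hg0 i)
    have hci : ∀ i, g i (c i) ≠ 0 := fun i => by simpa using hc i
    set G : ((∀ i, Fin (n i)) → F) →ₗ[F] F := ctr (fun j => ∏ i, g i (j i)) id with hG
    have hker : (⨆ i : Fin r, mtensor fun l => if l = i then U l else ⊤) ≤
        LinearMap.ker G := by
      refine iSup_le fun i => Submodule.span_le.mpr ?_
      rintro x ⟨w, hw, rfl⟩
      simp only [SetLike.mem_coe, LinearMap.mem_ker, hG, ctr_apply, id]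
      rw [pure_total_contract]
      refine Finset.prod_eq_zero (Finset.mem_univ i) ?_
      have hwi : w i ∈ U i := by have hh := hw i; simpa using hh
      exact hgperp i _ hwi
    have hz0 : (∏ i, ∑ a, g i a * (if c i = a then (1:F) else 0)) = 0 := by
      have hmem : (fun j => ∏ i, (fun a => if c i = a then (1:F) else 0) (j i)) ∈
          (⨆ i : Fin r, mtensor fun l => if l = i then U l else ⊤) := by
        rw [hStop]; exact Submodule.mem_top
      have hm := hker hmem
      rw [LinearMap.mem_ker] at hm
      rw [← pure_total_contract g (fun i a => if c i = a then (1:F) else 0)]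
      exact hm
    obtain ⟨i, -, hival⟩ := Finset.prod_eq_zero_iff.mp hz0
    apply hci i
    have : ∑ a, g i a * (if c i = a then (1:F) else 0) = g i (c i) := by
      simp [mul_ite]
    rw [this] at hival
    exact hival
  -- Step B: contraction argument.
  obtain ⟨k, hk⟩ := hWprop
  obtain ⟨f, hf0, hfperp⟩ := exists_perp_coeffs (W k) hk
  obtain ⟨k', hk'⟩ : ∃ k' : Fin r, k' ≠ k := by
    rcases eq_or_ne k ⟨0, by omega⟩ with h0 | h0
    · exact ⟨⟨1, hr⟩, by rw [h0]; exact Fin.ne_of_val_ne one_ne_zero⟩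
    · exact ⟨⟨0, by omega⟩, fun hh => h0 (hh ▸ rfl)⟩
  obtain ⟨u, humem, hu0⟩ := (Submodule.ne_bot_iff _).mp (hU0 k')
  obtain ⟨c0, hc0⟩ := Function.ne_iff.mp hu0
  have huc : u c0 ≠ 0 := by simpa using hc0
  have j0 : ∀ l, Fin (n l) := fun l => ⟨0, by have := hn l; omega⟩
  apply hf0
  funext a'
  show f a' = 0
  set b : ∀ l, Fin (n l) := Function.update (Function.update j0 k' c0) k a' with hb
  have hbk : b k = a' := by rw [hb]; exact Function.update_self _ _ _
  have hbk' : b k' = c0 := by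
    rw [hb, Function.update_of_ne hk']
    exact Function.update_self _ _ _
  set w : ∀ i, Fin (n i) → F :=
    Function.update (fun l => fun a => if b l = a then (1:F) else 0) k' u with hw
  set x : (∀ i, Fin (n i)) → F := fun j => ∏ i, w i (j i) with hx
  have hxS : x ∈ ⨆ i : Fin r, mtensor fun l => if l = i then U l else ⊤ := by
    refine le_iSup (fun i => mtensor fun l => if l = i then U l else ⊤) k' ?_
    refine Submodule.subset_span ⟨w, fun l => ?_, rfl⟩
    show w l ∈ if l = k' then U l else ⊤
    by_cases hl : l = k'
    · subst hl
      rw [if_pos rfl, hw, Function.update_self]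
      exact humem
    · rw [if_neg hl, hw, Function.update_of_ne hl]
      exact Submodule.mem_top
  rw [h] at hxS
  obtain ⟨y, hy, hxy⟩ := hxS
  have hyval : ∀ jj, y jj = (d jj)⁻¹ * x jj := by
    intro jj
    have h1 : d jj * y jj = x jj := congrFun hxy jj
    rw [← h1, inv_mul_cancel_left₀ (hd jj)]
  have hxval : ∀ a, x (Function.update b k a) = (if b k = a then 1 else 0) * u c0 := by
    intro a
    rw [hx]
    show ∏ i, w i (Function.update b k a i) = _
    rw [← Finset.mul_prod_erase Finset.univ _ (Finset.mem_univ k)]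
    have h1 : w k (Function.update b k a k) = if b k = a then 1 else 0 := by
      rw [Function.update_self, hw, Function.update_of_ne (Ne.symm hk')]
    have h2 : ∏ i ∈ Finset.univ.erase k, w i (Function.update b k a i) = u c0 := by
      have hcongr : ∀ i ∈ Finset.univ.erase k,
          w i (Function.update b k a i) = w i (b i) := fun i hi => by
        rw [Function.update_of_ne (Finset.ne_of_mem_erase hi)]
      rw [Finset.prod_congr rfl hcongr,
        ← Finset.mul_prod_erase _ _ (Finset.mem_erase.mpr ⟨hk', Finset.mem_univ k'⟩)]
      have h3 : w k' (b k') = u c0 := by rw [hw, Function.update_self, hbk']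
      have h4 : ∏ i ∈ (Finset.univ.erase k).erase k', w i (b i) = 1 := by
        refine Finset.prod_eq_one fun i hi => ?_
        rw [hw, Function.update_of_ne (Finset.mem_erase.mp hi).1]
        simp
      rw [h3, h4, mul_one]
    rw [h1, h2]
  have hctr := mtensor_contract W k f hfperp hy b
  have hterm : ∀ a, f a * y (Function.update b k a) =
      if b k = a then f a * ((d b)⁻¹ * u c0) else 0 := by
    intro a
    rw [hyval, hxval]
    by_cases hba : b k = a
    · rw [if_pos hba, if_pos hba, one_mul, ← hba, Function.update_eq_self]
    · rw [if_neg hba, if_neg hba, zero_mul, mul_zero, mul_zero]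
  rw [Finset.sum_congr rfl fun a _ => hterm a] at hctr
  rw [Finset.sum_ite_eq] at hctr
  rw [if_pos (Finset.mem_univ (b k))] at hctr
  rcases mul_eq_zero.mp hctr with h5 | h5
  · rw [← hbk]; exact h5
  · exact absurd (mul_eq_zero.mp h5)
      (by push_neg; exact ⟨inv_ne_zero (hd b), huc⟩)
end

section
/- Let F_q be a finite field, r ≥ 1, and 0 ≤ m_i ≤ q-2 for each i. With C = RS_q(m_1+1) ⊗ ... ⊗ RS_q(m_r+1) ⊆ F_q^{q^r}, the dual code C^⊥ equals the sum over i = 1,...,r of F_q^q ⊗ ... ⊗ RS_q(q-m_i-1) ⊗ ... ⊗ F_q^q (with RS_q(q-m_i-1) in the i-th tensor factor). -/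
open Polynomial

/-- The `r`-fold tensor product of codes `C i ⊆ F^F`, realized inside functions on
`Fin r → F` (i.e. `F^{q^r}`): the span of the pure tensors. -/
def rtensor {F : Type*} [Field F] {r : ℕ} (C : Fin r → Submodule F (F → F)) :
    Submodule F ((Fin r → F) → F) :=
  Submodule.span F
    {x | ∃ c : Fin r → F → F, (∀ i, c i ∈ C i) ∧ x = fun p => ∏ i, c i (p i)}

/-!
The monomials `x ↦ ∏ i, x i ^ a i` with exponents `a i < q` form a basis of `F^{F^r}`, and both
sides are spans of monomials. Since `∑ x : F, x ^ k` vanishes for `k < 2(q-1)`, `k ≠ q-1`, and is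
`-1` at `k = q-1`, the dot product of `x^a` with `x^(q-1-b)` is `(-1)^r` if `a = b` and `0`
otherwise, as long as every `b i ≥ 1`. The code `C` is spanned by the `x^(q-1-b)` with
`q-1-b i ≤ m i`, and `m i ≤ q-2` forces `b i ≥ 1`; so `v ⊥ C` says exactly that the coordinates of
`v` at these `b` vanish, i.e. that `v` is a combination of monomials `x^a` with `a i < q-1-m i`
for some `i`.
-/

open Matrix Submodule

section DualCode

variable {k ι κ : Type*} [Field k] [Fintype ι]

lemma mem_dualCode {C : Submodule k (ι → k)} {v : ι → k} :
    v ∈ dualCode C ↔ ∀ c ∈ C, v ⬝ᵥ c = 0 :=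
  Iff.rfl

lemma mem_dualCode_span {s : Set (ι → k)} {v : ι → k} :
    v ∈ dualCode (span k s) ↔ ∀ c ∈ s, v ⬝ᵥ c = 0 := by
  rw [mem_dualCode]
  refine ⟨fun h c hc => h c (subset_span hc), fun h c hc => ?_⟩
  induction hc using span_induction with
  | mem c hc => exact h c hc
  | zero => exact dotProduct_zero v
  | add c d _ _ hc hd => rw [dotProduct_add, hc, hd, add_zero]
  | smul a c _ hc => rw [dotProduct_smul, hc, smul_zero]

variable [Fintype κ]

lemma dotProduct_eq_repr_mul (B : Module.Basis κ k (ι → k)) {e : ι → k} {b : κ}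
    (h_off : ∀ a ≠ b, B a ⬝ᵥ e = 0) (v : ι → k) :
    v ⬝ᵥ e = B.repr v b * (B b ⬝ᵥ e) := by
  conv_lhs => rw [← B.sum_repr v]
  rw [sum_dotProduct, Finset.sum_eq_single b
    (fun a _ hab => by rw [smul_dotProduct, h_off a hab, smul_zero]) (by simp),
    smul_dotProduct, smul_eq_mul]

theorem dualCode_span_image_eq_span_image_compl (B : Module.Basis κ k (ι → k))
    (e : κ → ι → k) (S : Set κ) (h : ∀ b ∈ S, ∀ a, B a ⬝ᵥ e b = 0 ↔ a ≠ b) :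
    dualCode (span k (e '' S)) = span k (B '' Sᶜ) := by
  have h_repr : ∀ b ∈ S, ∀ v, v ⬝ᵥ e b = B.repr v b * (B b ⬝ᵥ e b) := fun b hb =>
    dotProduct_eq_repr_mul B fun a => (h b hb a).2
  ext v
  rw [mem_dualCode_span, Set.forall_mem_image, B.mem_span_image]
  constructor
  · intro hv b hb hbS
    have h_diag : B b ⬝ᵥ e b ≠ 0 := fun h0 => (h b hbS b).1 h0 rfl
    have h0 := hv hbS
    rw [h_repr b hbS] at h0
    exact Finsupp.mem_support_iff.1 hb ((mul_eq_zero.1 h0).resolve_right h_diag)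
  · intro hv b hbS
    rw [h_repr b hbS, Finsupp.notMem_support_iff.1 fun hb => hv hb hbS, zero_mul]

end DualCode

section Tensor

variable {F κ : Type*} [Field F] {r : ℕ}

variable (F r) in
noncomputable def pureTensor : MultilinearMap F (fun _ : Fin r => F → F) ((Fin r → F) → F) :=
  MultilinearMap.pi fun p =>
    (MultilinearMap.mkPiAlgebra F (Fin r) F).compLinearMap fun i => LinearMap.proj (p i)

lemma rtensor_span_image (g : κ → F → F) (S : Fin r → Set κ) :
    rtensor (fun i => span F (g '' S i)) =
      span F ((fun a p => ∏ i, g (a i) (p i)) '' Set.univ.pi S) := by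
  refine le_antisymm (span_le.2 ?_) (span_le.2 ?_)
  · rintro _ ⟨c, hc, rfl⟩
    choose l hl hlc using fun i => (Finsupp.mem_span_image_iff_linearCombination F).1 (hc i)
    change pureTensor F r c ∈ _
    obtain rfl : c = fun i => ∑ j ∈ (l i).support, l i j • g j :=
      funext fun i => (hlc i).symm
    rw [MultilinearMap.map_sum_finset]
    refine sum_mem fun a ha => ?_
    rw [MultilinearMap.map_smul_univ]
    refine smul_mem _ _ (subset_span ⟨a, fun i _ => ?_, rfl⟩)
    exact (Finsupp.mem_supported F _).1 (hl i) (Fintype.mem_piFinset.1 ha i)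
  · rintro _ ⟨a, ha, rfl⟩
    exact subset_span ⟨fun i => g (a i), fun i => subset_span ⟨a i, ha i trivial, rfl⟩, rfl⟩

lemma rtensor_top [Fintype F] : rtensor (fun _ : Fin r => (⊤ : Submodule F (F → F))) = ⊤ := by
  classical
  refine eq_top_iff.2 fun f _ => ?_
  rw [pi_eq_sum_univ f]
  refine sum_mem fun p _ => smul_mem _ _ (subset_span ⟨fun i x => if p i = x then 1 else 0,
    fun _ => trivial, ?_⟩)
  funext p'
  simp [Finset.prod_ite_zero, funext_iff]

end Tensor

section Monomial

variable (F : Type*) [Field F] [Fintype F] {r : ℕ}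

local notation "q" => Fintype.card F

def powFn (k : Fin q) : F → F := fun x => x ^ (k : ℕ)

def monomialFn (a : Fin r → Fin q) : (Fin r → F) → F := fun p => ∏ i, powFn F (a i) (p i)

lemma RS_eq_span_powFn {n : ℕ} (hn : n ≤ q) : RS F n = span F (powFn F '' {k | (k : ℕ) < n}) := by
  classical
  rw [RS, degreeLT_eq_span_X_pow, map_span]
  congr 1
  ext f
  simp only [Finset.coe_image, Finset.coe_range, Set.image_image, Set.mem_image, Set.mem_Iio,
    Set.mem_ofPred_eq]
  constructor
  · rintro ⟨k, hk, rfl⟩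
    exact ⟨⟨k, by omega⟩, hk, by funext x; simp [evalAll, powFn]⟩
  · rintro ⟨k, hk, rfl⟩
    exact ⟨k, hk, by funext x; simp [evalAll, powFn]⟩

lemma RS_card_eq_top : RS F q = ⊤ := by
  classical
  refine eq_top_iff.2 fun g _ => mem_map.2 ⟨Lagrange.interpolate Finset.univ id g, ?_, ?_⟩
  · rw [mem_degreeLT]
    simpa using Lagrange.degree_interpolate_lt (s := Finset.univ) (r := g) (Set.injOn_id _)
  · funext x
    exact Lagrange.eval_interpolate_at_node g (Set.injOn_id _) (Finset.mem_univ x)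

lemma span_powFn_univ : span F (powFn F '' Set.univ) = ⊤ := by
  rw [← RS_card_eq_top, RS_eq_span_powFn F le_rfl]
  simp

lemma rtensor_span_powFn (S : Fin r → Set (Fin q)) :
    rtensor (fun i => span F (powFn F '' S i)) = span F (monomialFn F '' Set.univ.pi S) :=
  rtensor_span_image _ _

lemma rtensor_RS_eq_span_monomialFn (n : Fin r → ℕ) (hn : ∀ i, n i ≤ q) :
    rtensor (fun i => RS F (n i)) = span F (monomialFn F '' {a | ∀ i, (a i : ℕ) < n i}) := by
  rw [funext fun i => RS_eq_span_powFn F (hn i), rtensor_span_powFn]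
  congr 2
  ext a
  simp

lemma rtensor_ite_RS_top_eq_span_monomialFn (i : Fin r) (n : Fin r → ℕ) (hn : n i ≤ q) :
    rtensor (fun l => if l = i then RS F (n l) else ⊤) =
      span F (monomialFn F '' {a | (a i : ℕ) < n i}) := by
  have h : (fun l => if l = i then RS F (n l) else ⊤) = fun l =>
      span F (powFn F '' if l = i then {k | (k : ℕ) < n l} else Set.univ) := funext fun l => by
    split_ifs with hl
    exacts [RS_eq_span_powFn F (hl ▸ hn), (span_powFn_univ F).symm]
  rw [h, rtensor_span_powFn]
  congr 2
  ext a
  simp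

lemma rtensor_RS_eq_span_monomialFn_rev (n : Fin r → ℕ) (hn : ∀ i, n i ≤ q) :
    rtensor (fun i => RS F (n i)) =
      span F ((fun b : Fin r → Fin q => monomialFn F fun i => (b i).rev) ''
        {b | ∀ i, q - n i ≤ (b i : ℕ)}) := by
  rw [rtensor_RS_eq_span_monomialFn F n hn]
  congr 1
  ext f
  constructor
  · rintro ⟨a, ha, rfl⟩
    refine ⟨fun i => (a i).rev, fun i => ?_, by simp⟩
    have := ha i
    rw [Fin.val_rev]
    omega
  · rintro ⟨b, hb, rfl⟩
    refine ⟨fun i => (b i).rev, fun i => ?_, rfl⟩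
    have := hb i
    rw [Fin.val_rev]
    omega

lemma iSup_rtensor_ite_RS_top (n : Fin r → ℕ) (hn : ∀ i, n i ≤ q) :
    ⨆ i, rtensor (fun l => if l = i then RS F (n l) else ⊤) =
      span F (monomialFn F '' {a | ∃ i, (a i : ℕ) < n i}) := by
  rw [iSup_congr fun i => rtensor_ite_RS_top_eq_span_monomialFn F i n (hn i), ← span_iUnion,
    ← Set.image_iUnion]
  congr 2
  ext a
  simp

lemma span_range_monomialFn : span F (Set.range (monomialFn F (r := r))) = ⊤ := by
  have h := rtensor_span_powFn F (fun _ : Fin r => Set.univ)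
  rwa [span_powFn_univ, rtensor_top, Set.pi_univ, Set.image_univ, eq_comm] at h

variable (r) in
noncomputable def monomialBasis : Module.Basis (Fin r → Fin q) F ((Fin r → F) → F) :=
  basisOfTopLeSpanOfCardEqFinrank (monomialFn F) (span_range_monomialFn F).ge
    (by simp [Module.finrank_fintype_fun_eq_card])

lemma coe_monomialBasis : ⇑(monomialBasis F r) = monomialFn F :=
  coe_basisOfTopLeSpanOfCardEqFinrank _ _ _

lemma monomialFn_dotProduct (a b : Fin r → Fin q) :
    monomialFn F a ⬝ᵥ monomialFn F b = ∏ i, ∑ x : F, x ^ ((a i : ℕ) + b i) := by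
  simp only [dotProduct, monomialFn, powFn, ← Finset.prod_mul_distrib, ← pow_add]
  exact (Fintype.prod_sum fun i (x : F) => x ^ ((a i : ℕ) + b i)).symm

end Monomial

section PowerSums

variable {F : Type*} [Field F] [Fintype F]

local notation "q" => Fintype.card F

lemma sum_pow_card_sub_one : ∑ x : F, x ^ (q - 1) = -1 := by
  classical
  have hq : 1 < q := Fintype.one_lt_card
  rw [← Finset.sum_erase_add _ _ (Finset.mem_univ 0), zero_pow (by omega), add_zero,
    Finset.sum_congr rfl fun x hx =>
      FiniteField.pow_card_sub_one_eq_one x (Finset.ne_of_mem_erase hx),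
    Finset.sum_const, Finset.card_erase_of_mem (Finset.mem_univ _), Finset.card_univ, nsmul_one,
    Nat.cast_sub hq.le, FiniteField.cast_card_eq_zero, Nat.cast_one, zero_sub]

lemma sum_pow_eq_zero {i : ℕ} (h_lt : i < 2 * (q - 1)) (h_ne : i ≠ q - 1) :
    ∑ x : F, x ^ i = 0 := by
  rcases lt_or_gt_of_ne h_ne with h | h
  · exact FiniteField.sum_pow_lt_card_sub_one F i h
  · have h_red : ∀ x : F, x ^ i = x ^ (i - (q - 1)) := fun x => by
      obtain ⟨j, rfl⟩ : ∃ j, i = j + q := ⟨i - q, by omega⟩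
      rw [pow_add, FiniteField.pow_card, ← pow_succ]
      congr 1
      omega
    rw [Finset.sum_congr rfl fun x _ => h_red x]
    exact FiniteField.sum_pow_lt_card_sub_one F _ (by omega)

lemma sum_pow_add_rev (j k : Fin q) (hk : 0 < (k : ℕ)) :
    ∑ x : F, x ^ ((j : ℕ) + k.rev) = if j = k then -1 else 0 := by
  rw [Fin.val_rev]
  split_ifs with h
  · subst h
    rw [show (j : ℕ) + (q - (j + 1)) = q - 1 by omega, sum_pow_card_sub_one]
  · have := Fin.val_ne_iff.2 h
    exact sum_pow_eq_zero (by omega) (by omega)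

lemma monomialFn_dotProduct_rev {r : ℕ} (a b : Fin r → Fin q) (hb : ∀ i, 0 < (b i : ℕ)) :
    monomialFn F a ⬝ᵥ monomialFn F (fun i => (b i).rev) = if a = b then (-1) ^ r else 0 := by
  rw [monomialFn_dotProduct]
  simp only [sum_pow_add_rev _ _ (hb _)]
  simp [Finset.prod_ite_zero, funext_iff]

end PowerSums

theorem dual_tensor_RS_general (F : Type*) [Field F] [Fintype F] (r : ℕ)
    (m : Fin r → ℕ) (hm : ∀ i, m i + 2 ≤ Fintype.card F) :
    dualCode (rtensor fun i => RS F (m i + 1)) =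
      ⨆ i : Fin r,
        rtensor (fun l => if l = i then RS F (Fintype.card F - m l - 1) else ⊤) := by
  rw [rtensor_RS_eq_span_monomialFn_rev F _ fun i => by have := hm i; omega,
    iSup_rtensor_ite_RS_top F _ fun i => by omega, ← coe_monomialBasis]
  convert dualCode_span_image_eq_span_image_compl (monomialBasis F r) _ _ ?_ using 3
  · ext a
    simp only [Set.mem_ofPred_eq, Set.mem_compl_iff, not_forall, not_le]
    exact exists_congr fun i => by omega
  intro b hb a
  have hb_pos : ∀ i, 0 < (b i : ℕ) := fun i => by have := hm i; have := hb i; omega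
  rw [coe_monomialBasis, monomialFn_dotProduct_rev _ _ hb_pos]
  simp

/-- For `0 ≤ m i ≤ q - 2`, the dual of `C = RS_q(m 1 + 1) ⊗ ⋯ ⊗ RS_q(m r + 1)` is the
sum over `i` of `F_q^q ⊗ ⋯ ⊗ RS_q(q - m i - 1) ⊗ ⋯ ⊗ F_q^q` (with the Reed–Solomon
factor in the `i`-th position). -/
theorem dual_tensor_RS (F : Type*) [Field F] [Fintype F] (r : ℕ) (hr : 1 ≤ r)
    (m : Fin r → ℕ) (hm : ∀ i, m i + 2 ≤ Fintype.card F) :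
    dualCode (rtensor fun i => RS F (m i + 1)) =
      ⨆ i : Fin r,
        rtensor (fun l => if l = i then RS F (Fintype.card F - m l - 1) else ⊤) :=
  dual_tensor_RS_general F r m hm
end

section
/- Let K be a field and R = K[[x_1, ..., x_r]] the formal power series ring. For f ∈ R and a ≥ 1, define res_a(f) to be the coefficient of x_1^{a-1}···x_r^{a-1} in f. If f ≡ c·x_1^{a-1}···x_r^{a-1} mod (x_1^a, ..., x_r^a) for some c ∈ K, then for every g ∈ R, res_a(g·f) = g(0)·c, where g(0) is the constant term of g. -/
namespace MvPowerSeries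

variable {σ R : Type*} [CommSemiring R]

theorem coeff_mul_X_pow_of_lt (φ : MvPowerSeries σ R) {m : σ →₀ ℕ} {s : σ} {n : ℕ}
    (h : m s < n) : coeff m (φ * X s ^ n) = 0 := by
  rw [X_pow_eq, coeff_mul_monomial, if_neg]
  intro hle
  simpa using (hle s).trans_lt h

theorem coeff_eq_zero_of_mem_span_X_pow {a : ℕ} {m : σ →₀ ℕ} (hm : ∀ i, m i < a)
    {φ : MvPowerSeries σ R} (hφ : φ ∈ Ideal.span (Set.range fun i : σ => (X i) ^ a)) :
    coeff m φ = 0 := by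
  obtain ⟨c, rfl⟩ := Finsupp.mem_span_range_iff_exists_finsupp.mp hφ
  rw [Finsupp.sum, map_sum]
  exact Finset.sum_eq_zero fun i _ => by rw [smul_eq_mul, coeff_mul_X_pow_of_lt _ (hm i)]

theorem coeff_mul_monomial_self (φ : MvPowerSeries σ R) (n : σ →₀ ℕ) (a : R) :
    coeff n (φ * monomial n a) = constantCoeff φ * a := by
  rw [coeff_mul_monomial, if_pos le_rfl, tsub_self, coeff_zero_eq_constantCoeff_apply]

end MvPowerSeries

/-- Residues against a rectified form are evaluation-linear: in `K[[x₁,...,x_r]]`, if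
`f ≡ c·x₁^{a-1}⋯x_r^{a-1} mod (x₁^a,...,x_r^a)`, then for every `g`, the coefficient of
`x₁^{a-1}⋯x_r^{a-1}` in `g·f` equals `g(0)·c`. -/
theorem coeff_mul_of_rectified (K : Type*) [Field K] (r : ℕ) (a : ℕ) (ha : 1 ≤ a)
    (f : MvPowerSeries (Fin r) K) (c : K)
    (hf : f - MvPowerSeries.monomial (Finsupp.equivFunOnFinite.symm fun _ => a - 1) c ∈
      Ideal.span (Set.range fun i : Fin r => (MvPowerSeries.X i) ^ a)) :
    ∀ g : MvPowerSeries (Fin r) K,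
      MvPowerSeries.coeff (Finsupp.equivFunOnFinite.symm fun _ => a - 1) (g * f) =
        MvPowerSeries.constantCoeff g * c := by
  intro g
  set d : Fin r →₀ ℕ := Finsupp.equivFunOnFinite.symm fun _ => a - 1
  have hd : ∀ i, d i < a := fun _ => Nat.sub_lt_of_pos_le Nat.one_pos ha
  have hres : MvPowerSeries.coeff d (g * (f - MvPowerSeries.monomial d c)) = 0 :=
    MvPowerSeries.coeff_eq_zero_of_mem_span_X_pow hd (Ideal.mul_mem_left _ g hf)
  rw [← sub_add_cancel f (MvPowerSeries.monomial d c), mul_add, map_add, hres, zero_add,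
    MvPowerSeries.coeff_mul_monomial_self]
end

section
/- Let R be a commutative ring, x_1,...,x_r, f_1,...,f_r ∈ R, a ≥ 1, and suppose there are matrices [r_{ij}], [s_{jl}] over R with x_i^a = Σ_j r_{ij} f_j and f_j = Σ_l s_{jl} x_l for all i, j. If (x_1,...,x_r) is a regular sequence, then det[r_{ij}]·det[s_{jl}] ≡ x_1^{a-1}···x_r^{a-1} mod (x_1^a, ..., x_r^a). -/
/-!
Put `M = rM * sM` and `Δ = diagonal (x i ^ (a - 1))`. Both send `x` to `(x i ^ a)ᵢ`, so every
row of `M - Δ` is a syzygy of `x` over `R`; since `x` is regular it is a combination of the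
Koszul syzygies `x w • eᵤ - x u • e_w`, i.e. of the form `(b - bᵀ) *ᵥ x`. Modulo
`I = (x i ^ a)` both `M` and `Δ` annihilate `x`. When all rows of a matrix but the `k`-th
annihilate `x`, Cramer's rule makes the `k`-th column `c` of its adjugate satisfy
`c q * x p = x q * c p`; as the determinant is `∑ p, v p * c p` in the `k`-th row `v`, it
vanishes on `v = (b - bᵀ) *ᵥ x`. Trading the rows of `M` for those of `Δ` one at a time thus
leaves the determinant unchanged modulo `I`.
-/

open Matrix RingTheory.Sequence

section Koszul

variable {R : Type*} [CommRing R]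

lemma isWeaklyRegular_ofFn_succ_iff {r : ℕ} (x : Fin (r + 1) → R) :
    IsWeaklyRegular R (List.ofFn x) ↔
      IsWeaklyRegular R (List.ofFn fun i : Fin r => x i.castSucc) ∧
      ∀ c : R, x (Fin.last r) * c ∈ Ideal.span (Set.range fun i : Fin r => x i.castSucc) →
        c ∈ Ideal.span (Set.range fun i : Fin r => x i.castSucc) := by
  have hI : Ideal.ofList (List.ofFn fun i : Fin r => x i.castSucc) =
      Ideal.span (Set.range fun i : Fin r => x i.castSucc) := by
    simp [Ideal.ofList, List.mem_ofFn, Set.range]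
  rw [List.ofFn_succ_last, isWeaklyRegular_append_iff, isWeaklyRegular_singleton_iff,
    isSMulRegular_quotient_iff_mem_of_smul_mem, Ideal.smul_top_eq_map, hI]
  simp

-- `(b - bᵀ) *ᵥ x = ∑ u, ∑ w, b u w • (x w • Pi.single u 1 - x u • Pi.single w 1)`
-- is the general combination of Koszul syzygies.
theorem exists_sub_transpose_mulVec_eq_of_dotProduct_eq_zero :
    ∀ {r : ℕ} (x : Fin r → R), IsWeaklyRegular R (List.ofFn x) →
      ∀ c : Fin r → R, c ⬝ᵥ x = 0 →
        ∃ b : Matrix (Fin r) (Fin r) R, (b - bᵀ) *ᵥ x = c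
  | 0, _, _, c, _ => ⟨0, funext fun i => i.elim0⟩
  | r + 1, x, hreg, c, hc => by
    obtain ⟨hreg', hlast⟩ := (isWeaklyRegular_ofFn_succ_iff x).mp hreg
    have hc' : c (Fin.last r) * x (Fin.last r) = -∑ i : Fin r, c i.castSucc * x i.castSucc := by
      rw [dotProduct, Fin.sum_univ_castSucc] at hc
      linear_combination hc
    obtain ⟨d, hd⟩ := (Ideal.mem_span_range_iff_exists_fun).mp (hlast (c (Fin.last r)) (by
      rw [mul_comm, hc']
      exact neg_mem <| Ideal.sum_mem _ fun i _ =>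
        Ideal.mul_mem_left _ _ (Ideal.subset_span ⟨i, rfl⟩)))
    obtain ⟨b', hb'⟩ := exists_sub_transpose_mulVec_eq_of_dotProduct_eq_zero _ hreg'
      (fun i => c i.castSucc + x (Fin.last r) * d i) (by
        simp only [dotProduct, add_mul, Finset.sum_add_distrib, mul_assoc, ← Finset.mul_sum, hd]
        linear_combination hc')
    -- The last row `d` contributes `c (Fin.last r)` at `Fin.last r` and `-x (Fin.last r) • d`
    -- elsewhere, undoing the shift from `c` to the syzygy handled by `b'`.
    refine ⟨Matrix.of fun p w => Fin.lastCases (Fin.lastCases 0 d w)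
      (fun p' => Fin.lastCases 0 (b' p') w) p, funext fun p => ?_⟩
    induction p using Fin.lastCases with
    | last => simp [mulVec, dotProduct, Fin.sum_univ_castSucc, hd]
    | cast p =>
      have := congrFun hb' p
      simp [mulVec, dotProduct, Fin.sum_univ_castSucc, sub_mul] at this ⊢
      linear_combination this

section Cofactor

variable {n : Type*} [Fintype n] [DecidableEq n]

lemma adjugate_updateRow_apply_self (A : Matrix n n R) (k p : n) (v : n → R) :
    (A.updateRow k v).adjugate p k = A.adjugate p k := by
  simp only [adjugate_apply, updateRow_idem]

lemma det_updateRow_eq_sum_mul_adjugate (A : Matrix n n R) (k : n) (v : n → R) :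
    (A.updateRow k v).det = ∑ p, v p * A.adjugate p k := by
  simp only [det_eq_sum_mul_adjugate_row _ k, updateRow_self, adjugate_updateRow_apply_self]

lemma adjugate_apply_mul_comm_of_mulVec_eq_zero {A : Matrix n n R} {x : n → R} {k : n}
    (hA : ∀ i ≠ k, (A *ᵥ x) i = 0) (p q : n) :
    A.adjugate q k * x p = x q * A.adjugate p k := by
  set B := A.updateRow k (Pi.single q 1)
  have hBx : B *ᵥ x = Pi.single k (x q) := by
    funext i
    by_cases hik : i = k
    · subst hik; simp [B, mulVec, updateRow_self]
    · simp [B, mulVec, hik, ← hA i hik]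
  have := congrFun (congrArg (· *ᵥ x) (adjugate_mul B)) p
  simp only [← mulVec_mulVec, hBx, smul_mulVec, one_mulVec] at this
  simpa [B, adjugate_apply, mulVec_single, adjugate_updateRow_apply_self, mul_comm] using this.symm

lemma det_updateRow_sub_transpose_mulVec {A : Matrix n n R} {x : n → R} {k : n}
    (hA : ∀ i ≠ k, (A *ᵥ x) i = 0) (b : Matrix n n R) :
    (A.updateRow k ((b - bᵀ) *ᵥ x)).det = 0 := by
  have hsymm := adjugate_apply_mul_comm_of_mulVec_eq_zero hA
  calc (A.updateRow k ((b - bᵀ) *ᵥ x)).det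
      = ∑ p, ∑ w, b p w * (x w * A.adjugate p k)
          - ∑ p, ∑ w, b w p * (x w * A.adjugate p k) := by
        simp only [det_updateRow_eq_sum_mul_adjugate, mulVec, dotProduct, Matrix.sub_apply,
          transpose_apply, sub_mul, Finset.sum_mul, Finset.sum_sub_distrib, mul_assoc]
    _ = 0 := by
        rw [Finset.sum_comm (f := fun p w => b w p * _), sub_eq_zero]
        refine Finset.sum_congr rfl fun p _ => Finset.sum_congr rfl fun w _ => ?_
        rw [← hsymm w p, mul_comm (x w)]

theorem det_eq_det_of_mulVec_eq_zero {M N : Matrix n n R} {x : n → R}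
    (hM : M *ᵥ x = 0) (hN : N *ᵥ x = 0)
    (hMN : ∀ i, ∃ b : Matrix n n R, M i - N i = (b - bᵀ) *ᵥ x) :
    M.det = N.det := by
  suffices key : ∀ s : Finset n, ∀ M : Matrix n n R, M *ᵥ x = 0 →
      (∀ i, ∃ b : Matrix n n R, M i - N i = (b - bᵀ) *ᵥ x) → (∀ i ∉ s, M i = N i) →
      M.det = N.det from
    key Finset.univ M hM hMN fun i hi => absurd (Finset.mem_univ i) hi
  intro s
  induction s using Finset.induction_on with
  | empty => exact fun M _ _ hs => congrArg det (funext fun i => hs i (Finset.notMem_empty i))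
  | insert i s _ ih =>
    intro M hM hMN hs
    obtain ⟨b, hb⟩ := hMN i
    have hstep : M.det = (M.updateRow i (N i)).det := by
      conv_lhs => rw [← updateRow_eq_self M i, ← add_sub_cancel (N i) (M i), hb]
      rw [det_updateRow_add, det_updateRow_sub_transpose_mulVec (fun j _ => congrFun hM j),
        add_zero]
    rw [hstep]
    refine ih _ ?_ (fun j => ?_) (fun j hj => ?_)
    · rw [updateRow_mulVec, hM]
      exact Function.update_eq_self_iff.mpr (congrFun hN i)
    · by_cases hji : j = i
      · exact ⟨0, by simp [hji]⟩
      · simpa [updateRow_ne hji] using hMN j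
    · by_cases hji : j = i
      · simp [hji]
      · simpa [updateRow_ne hji] using hs j (by simp [hji, hj])

end Cofactor

theorem det_sub_det_mem_of_mulVec_eq {r : ℕ} {x : Fin r → R}
    (hreg : IsWeaklyRegular R (List.ofFn x)) (I : Ideal R) {M N : Matrix (Fin r) (Fin r) R}
    (hMN : M *ᵥ x = N *ᵥ x) (hI : ∀ i, (M *ᵥ x) i ∈ I) : M.det - N.det ∈ I := by
  let π := Ideal.Quotient.mk I
  have hkoszul (i : Fin r) : ∃ b : Matrix (Fin r) (Fin r) R, M i - N i = (b - bᵀ) *ᵥ x := by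
    obtain ⟨b, hb⟩ := exists_sub_transpose_mulVec_eq_of_dotProduct_eq_zero x hreg (M i - N i)
      (by rw [sub_dotProduct]; exact sub_eq_zero.mpr (congrFun hMN i))
    exact ⟨b, hb.symm⟩
  have hmap (A : Matrix (Fin r) (Fin r) R) : A.map π *ᵥ (π ∘ x) = π ∘ (A *ᵥ x) :=
    funext fun i => (RingHom.map_mulVec π A x i).symm
  have hvanish (A : Matrix (Fin r) (Fin r) R) (hA : A *ᵥ x = M *ᵥ x) :
      A.map π *ᵥ (π ∘ x) = 0 :=
    funext fun i => by simpa [hmap, hA] using Ideal.Quotient.eq_zero_iff_mem.mpr (hI i)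
  have hdet : (M.map π).det = (N.map π).det := by
    refine det_eq_det_of_mulVec_eq_zero (hvanish M rfl) (hvanish N hMN.symm) fun i => ?_
    obtain ⟨b, hb⟩ := hkoszul i
    refine ⟨b.map π, ?_⟩
    rw [← transpose_map, ← Matrix.map_sub _ (map_sub π), hmap, ← hb]
    rfl
  rw [← Ideal.Quotient.eq]
  simpa [RingHom.map_det] using hdet

end Koszul

/-- If `x i ^ a = ∑ j (r i j)(f j)` and `f j = ∑ l (s j l)(x l)`, and `(x 1,...,x r)` is
a regular sequence, then `det[r]·det[s] ≡ x₁^{a-1}⋯x_r^{a-1} mod (x₁^a,...,x_r^a)`. -/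
theorem det_mul_det_congr (R : Type*) [CommRing R] (r : ℕ) (x f : Fin r → R)
    (a : ℕ) (ha : 1 ≤ a)
    (rM sM : Matrix (Fin r) (Fin r) R)
    (hx : ∀ i, x i ^ a = ∑ j, rM i j * f j)
    (hf : ∀ j, f j = ∑ l, sM j l * x l)
    (hreg : RingTheory.Sequence.IsRegular R (List.ofFn x)) :
    rM.det * sM.det - ∏ i, x i ^ (a - 1) ∈
      Ideal.span (Set.range fun i => x i ^ a) := by
  have hsx : sM *ᵥ x = f := funext fun j => (hf j).symm
  have hMx : (rM * sM) *ᵥ x = fun i => x i ^ a := by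
    rw [← mulVec_mulVec, hsx]
    exact funext fun i => (hx i).symm
  have hΔx : diagonal (fun i => x i ^ (a - 1)) *ᵥ x = fun i => x i ^ a :=
    funext fun i => by rw [mulVec_diagonal, ← pow_succ, Nat.sub_add_cancel ha]
  simpa [det_mul, det_diagonal] using det_sub_det_mem_of_mulVec_eq hreg.toIsWeaklyRegular _
    (hMx.trans hΔx.symm) fun i => hMx ▸ Ideal.subset_span ⟨i, rfl⟩
end
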